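/- In a periodic motorized parallel chip-firing game on a finite connected graph (with every motor's firing sequence periodic), every vertex fires the same number of times per period: for all vertices v, w, Σ_{t=0}^{p−1} f(v,t) = Σ_{t=0}^{p−1} f(w,t). -/

import Mathlib

/-!
Telescoping the update rule over one period shows that the vector of firing counts per period is
killed by the graph Laplacian `L`. On a connected graph the kernel of `L` consists of the constant
vectors, since `x ⬝ᵥ L *ᵥ x` is the sum of `(x i - x j) ^ 2` over the edges.
-/

open Finset

/-- A motorized parallel chip-firing game on `G` with motor set `M`: chip counts
are integers (motors may go negative); every vertex either fires (`f t v = 1`) or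
waits (`f t v = 0`); non-motor vertices fire exactly when they have at least as
many chips as their degree; chips evolve by the parallel chip-firing update rule. -/
def MotorizedGame {V : Type*} [Fintype V] (G : SimpleGraph V) [DecidableRel G.Adj]
    (M : Set V) (c : ℕ → V → ℤ) (f : ℕ → V → ℕ) : Prop :=
  (∀ t v, f t v = 0 ∨ f t v = 1) ∧
  (∀ t v, v ∉ M → f t v = if (G.degree v : ℤ) ≤ c t v then 1 else 0) ∧
  (∀ t v, c (t + 1) v
      = c t v + ∑ w ∈ G.neighborFinset v, (f t w : ℤ) - (f t v : ℤ) * G.degree v)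

open Matrix

namespace MotorizedGame

variable {V : Type*} [Fintype V] {G : SimpleGraph V} [DecidableRel G.Adj] {M : Set V}
  {c : ℕ → V → ℤ} {f : ℕ → V → ℕ}

theorem chips_eq_chips_zero_add_firings (hgame : MotorizedGame G M c f) (n : ℕ) (v : V) :
    c n v = c 0 v + ∑ w ∈ G.neighborFinset v, ∑ t ∈ range n, (f t w : ℤ)
      - (∑ t ∈ range n, (f t v : ℤ)) * G.degree v := by
  induction n with
  | zero => simp
  | succ n ih =>
    rw [hgame.2.2, ih]
    simp only [sum_range_succ, sum_add_distrib]
    ring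

theorem lapMatrix_mulVec_firings_eq_zero [DecidableEq V] (hgame : MotorizedGame G M c f)
    {p : ℕ} (hperc : ∀ v, c p v = c 0 v) :
    G.lapMatrix ℝ *ᵥ (fun v ↦ ∑ t ∈ range p, (f t v : ℝ)) = 0 := by
  ext v
  have hbalance : ∑ w ∈ G.neighborFinset v, ∑ t ∈ range p, (f t w : ℤ)
      = (∑ t ∈ range p, (f t v : ℤ)) * G.degree v := by
    linarith [hgame.chips_eq_chips_zero_add_firings p v, hperc v]
  rw [SimpleGraph.lapMatrix_mulVec_apply, Pi.zero_apply, sub_eq_zero, mul_comm]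
  exact_mod_cast hbalance.symm

end MotorizedGame

theorem motorized_equal_firing_counts_general {V : Type*} [Fintype V] (G : SimpleGraph V)
    [DecidableRel G.Adj] (hconn : G.Connected) (M : Set V)
    (c : ℕ → V → ℤ) (f : ℕ → V → ℕ) (hgame : MotorizedGame G M c f)
    (p : ℕ)
    (hperc : ∀ t v, c (t + p) v = c t v)
    (v w : V) :
    ∑ t ∈ range p, f t v = ∑ t ∈ range p, f t w := by
  classical
  have hker := hgame.lapMatrix_mulVec_firings_eq_zero fun u ↦ by simpa using hperc 0 u
  exact_mod_cast (G.lapMatrix_mulVec_eq_zero_iff_forall_reachable).1 hker v w (hconn v w)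

/-- In a periodic motorized game on a finite connected graph, every vertex fires
the same number of times per period. -/
theorem motorized_equal_firing_counts {V : Type*} [Fintype V] (G : SimpleGraph V)
    [DecidableRel G.Adj] (hconn : G.Connected) (M : Set V) (hM : M.Nonempty)
    (c : ℕ → V → ℤ) (f : ℕ → V → ℕ) (hgame : MotorizedGame G M c f)
    (p : ℕ) (hp : 0 < p)
    (hperc : ∀ t v, c (t + p) v = c t v) (hperf : ∀ t v, f (t + p) v = f t v)
    (v w : V) :
    ∑ t ∈ range p, f t v = ∑ t ∈ range p, f t w :=
  motorized_equal_firing_counts_general G hconn M c f hgame p hperc v w
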